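/- arXiv:2308.06400 — 7 statements merged into one kernel-verified Lean document; each statement's English description precedes it below -/
import Mathlib

section
/- A linear relation A is positive (⟨f,g⟩ ≥ 0 for all (f,g) ∈ A) if and only if its Krein transform K(A) is a symmetric contraction, i.e., K(A) ⊆ K(A)* and ‖k‖ ≤ ‖h‖ for all (h,k) ∈ K(A). -/
/-!
For `(f, g), (f', g') ∈ A` put `(h, k) = (f + g, f - g)` and `(h', k') = (f' + g', f' - g')`.
Expanding inner products gives `⟪k, h'⟫ - ⟪h, k'⟫ = -2 (⟪g, f'⟫ - ⟪f, g'⟫)` and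
`‖h‖² - ‖k‖² = 4 Re ⟪f, g⟫`, so `K(A)` is symmetric iff `A` is, and `K(A)` is contractive iff
`Re ⟪f, g⟫ ≥ 0` on `A`. Finally `A` is symmetric iff `⟪f, g⟫` is real on `A`, by complex
polarization along `p + q` and `p + i q`.
-/

open scoped InnerProductSpace

variable {H : Type*} [NormedAddCommGroup H] [InnerProductSpace ℂ H]

/-- The adjoint of a linear relation `T ⊆ H × H`:
`T* = {(h,k) : ⟨k,f⟩ = ⟨h,g⟩ for all (f,g) ∈ T}` (inner product antilinear in the
first entry). -/
def adjointRel (T : Submodule ℂ (H × H)) : Submodule ℂ (H × H) where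
  carrier := {p | ∀ q ∈ T, (inner ℂ p.2 q.1 : ℂ) = inner ℂ p.1 q.2}
  add_mem' := by
    intro a b ha hb q hq
    simp only [Prod.fst_add, Prod.snd_add, inner_add_left]
    rw [ha q hq, hb q hq]
  zero_mem' := by intro q hq; simp
  smul_mem' := by
    intro c p hp q hq
    simp only [Prod.smul_fst, Prod.smul_snd, inner_smul_left]
    rw [hp q hq]

/-- The map `(f,g) ↦ (f+g, f−g)` defining the Krein transform. -/
noncomputable def kreinMap : (H × H) →ₗ[ℂ] (H × H) :=
  (LinearMap.fst ℂ H H + LinearMap.snd ℂ H H).prod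
    (LinearMap.fst ℂ H H - LinearMap.snd ℂ H H)

/-- The Krein transform `K(T) = {(f+g, f−g) : (f,g) ∈ T}` of a linear relation. -/
noncomputable def krein (T : Submodule ℂ (H × H)) : Submodule ℂ (H × H) :=
  T.map kreinMap

/-- The inverse relation map `(f,g) ↦ (g,f)`. -/
def invMap : (H × H) →ₗ[ℂ] (H × H) :=
  (LinearMap.snd ℂ H H).prod (LinearMap.fst ℂ H H)

/-- The negation map `(f,g) ↦ (f,−g)`, so that `T.map negMap = -T`. -/
def negMap : (H × H) →ₗ[ℂ] (H × H) :=
  (LinearMap.fst ℂ H H).prod (-(LinearMap.snd ℂ H H))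

/-- The map `(f,g) ↦ (g,−f)`, so that `T.map negInvMap = -T⁻¹`. -/
def negInvMap : (H × H) →ₗ[ℂ] (H × H) :=
  (LinearMap.snd ℂ H H).prod (-(LinearMap.fst ℂ H H))

/-- The orthogonal complement of a linear relation inside `H × H`, with respect to
the product inner product. -/
def orthRel (T : Submodule ℂ (H × H)) : Submodule ℂ (H × H) where
  carrier := {p | ∀ q ∈ T, (inner ℂ q.1 p.1 : ℂ) + inner ℂ q.2 p.2 = 0}
  add_mem' := by
    intro a b ha hb q hq
    simp only [Prod.fst_add, Prod.snd_add, inner_add_right]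
    linear_combination ha q hq + hb q hq
  zero_mem' := by intro q hq; simp
  smul_mem' := by
    intro c p hp q hq
    simp only [Prod.smul_fst, Prod.smul_snd, inner_smul_right]
    linear_combination c * hp q hq

@[simp]
lemma kreinMap_apply (p : H × H) : kreinMap p = (p.1 + p.2, p.1 - p.2) := rfl

lemma mem_adjointRel {T : Submodule ℂ (H × H)} {p : H × H} :
    p ∈ adjointRel T ↔ ∀ q ∈ T, ⟪p.2, q.1⟫_ℂ = ⟪p.1, q.2⟫_ℂ :=
  Iff.rfl

lemma forall_mem_krein {T : Submodule ℂ (H × H)} {P : H × H → Prop} :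
    (∀ q ∈ krein T, P q) ↔ ∀ p ∈ T, P (kreinMap p) :=
  ⟨fun h p hp => h _ (Submodule.mem_map_of_mem hp), by rintro h _ ⟨p, hp, rfl⟩; exact h p hp⟩

lemma kreinMap_mem_adjointRel_krein_iff {T : Submodule ℂ (H × H)} {p : H × H} :
    kreinMap p ∈ adjointRel (krein T) ↔ p ∈ adjointRel T := by
  rw [mem_adjointRel, mem_adjointRel, forall_mem_krein]
  refine forall₂_congr fun q _ => ?_
  have key : ⟪(kreinMap p).2, (kreinMap q).1⟫_ℂ - ⟪(kreinMap p).1, (kreinMap q).2⟫_ℂ =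
      -2 * (⟪p.2, q.1⟫_ℂ - ⟪p.1, q.2⟫_ℂ) := by
    simp only [kreinMap_apply, inner_add_left, inner_add_right, inner_sub_left, inner_sub_right]
    ring
  rw [← sub_eq_zero, key, ← sub_eq_zero (a := ⟪p.2, q.1⟫_ℂ)]
  simp

lemma krein_le_adjointRel_krein_iff {T : Submodule ℂ (H × H)} :
    krein T ≤ adjointRel (krein T) ↔ T ≤ adjointRel T := by
  simp only [SetLike.le_def, forall_mem_krein, kreinMap_mem_adjointRel_krein_iff]

lemma le_adjointRel_iff_forall_inner_im_eq_zero {T : Submodule ℂ (H × H)} :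
    T ≤ adjointRel T ↔ ∀ p ∈ T, (⟪p.1, p.2⟫_ℂ).im = 0 := by
  have hermitian_iff : ∀ p : H × H, ⟪p.2, p.1⟫_ℂ = ⟪p.1, p.2⟫_ℂ ↔ (⟪p.1, p.2⟫_ℂ).im = 0 :=
    fun p => by rw [← inner_conj_symm, Complex.conj_eq_iff_im]
  refine ⟨fun h p hp => (hermitian_iff p).mp (h hp p hp), fun h p hp q hq => ?_⟩
  have hd : ∀ r ∈ T, ⟪r.2, r.1⟫_ℂ = ⟪r.1, r.2⟫_ℂ := fun r hr => (hermitian_iff r).mpr (h r hr)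
  have h1 := hd (p + q) (T.add_mem hp hq)
  have h2 := hd (p + Complex.I • q) (T.add_mem hp (T.smul_mem _ hq))
  simp only [Prod.fst_add, Prod.snd_add, Prod.smul_fst, Prod.smul_snd, inner_add_left,
    inner_add_right, inner_smul_left, inner_smul_right, Complex.conj_I, hd p hp, hd q hq] at h1 h2
  linear_combination (h1 - Complex.I * h2) / 2 +
    (⟪p.2, q.1⟫_ℂ + ⟪q.1, p.2⟫_ℂ - ⟪p.1, q.2⟫_ℂ - ⟪q.2, p.1⟫_ℂ) / 2 * Complex.I_sq

lemma norm_sub_le_norm_add_iff_re_inner_nonneg {𝕜 E : Type*} [RCLike 𝕜] [NormedAddCommGroup E]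
    [InnerProductSpace 𝕜 E] (x y : E) : ‖x - y‖ ≤ ‖x + y‖ ↔ 0 ≤ RCLike.re ⟪x, y⟫_𝕜 := by
  rw [re_inner_eq_norm_add_mul_self_sub_norm_sub_mul_self_div_four,
    mul_self_le_mul_self_iff (norm_nonneg _) (norm_nonneg _)]
  constructor <;> intro h <;> linarith

lemma forall_mem_krein_norm_le_iff {T : Submodule ℂ (H × H)} :
    (∀ q ∈ krein T, ‖q.2‖ ≤ ‖q.1‖) ↔ ∀ p ∈ T, 0 ≤ (⟪p.1, p.2⟫_ℂ).re := by
  simp only [forall_mem_krein, kreinMap_apply, norm_sub_le_norm_add_iff_re_inner_nonneg (𝕜 := ℂ),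
    RCLike.re_to_complex]

/-- `A` is positive iff its Krein transform is a symmetric contraction. -/
theorem positive_iff_krein_symmetric_contraction (A : Submodule ℂ (H × H)) :
    (∀ p ∈ A, ((inner ℂ p.1 p.2 : ℂ)).im = 0 ∧ 0 ≤ ((inner ℂ p.1 p.2 : ℂ)).re) ↔
      (krein A ≤ adjointRel (krein A) ∧ ∀ q ∈ krein A, ‖q.2‖ ≤ ‖q.1‖) := by
  rw [krein_le_adjointRel_krein_iff, le_adjointRel_iff_forall_inner_im_eq_zero,
    forall_mem_krein_norm_le_iff]
  exact forall₂_and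
end

section
/- If A is a positive linear relation that is unbounded or has a nontrivial kernel, then its Krein transform K(A) is a symmetric contraction of operator norm equal to one. -/
/-!
Positivity makes the form `⟪f, g⟫` on `A` real, hence Hermitian by polarization, and this is
exactly the symmetry of `K(A)`; `Re ⟪f, g⟫ ≥ 0` gives `‖f - g‖ ≤ ‖f + g‖`, so `K(A)` is a
contraction. The norm reaches `1`: a kernel vector `f` gives `(f, f) ∈ K(A)`, while if
`‖g‖ > C ‖f‖` then `(h, k) = (f + g, f - g)` has `‖h‖ - ‖k‖ ≤ ‖h + k‖ = 2 ‖f‖` and `‖h‖ ≥ ‖g‖`,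
so `‖k‖ / ‖h‖ ≥ 1 - 2 / C`.
-/

open scoped InnerProductSpace

variable {H : Type*} [NormedAddCommGroup H] [InnerProductSpace ℂ H]

theorem norm_sub_le_norm_add_of_re_inner_nonneg {𝕜 E : Type*} [RCLike 𝕜]
    [NormedAddCommGroup E] [InnerProductSpace 𝕜 E] {x y : E} (h : 0 ≤ RCLike.re (inner 𝕜 x y)) :
    ‖x - y‖ ≤ ‖x + y‖ := by
  rw [← sq_le_sq₀ (norm_nonneg _) (norm_nonneg _), @norm_sub_sq 𝕜, @norm_add_sq 𝕜]
  linarith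

section KreinTransform

variable {A : Submodule ℂ (H × H)}

theorem inner_fst_snd_eq_of_im_inner_eq_zero (hA : ∀ p ∈ A, (⟪p.1, p.2⟫_ℂ).im = 0)
    {p q : H × H} (hp : p ∈ A) (hq : q ∈ A) : ⟪p.1, q.2⟫_ℂ = ⟪p.2, q.1⟫_ℂ := by
  have hsum := hA _ (A.add_mem hp hq)
  have hsumI := hA _ (A.add_mem hp (A.smul_mem Complex.I hq))
  simp only [Prod.fst_add, Prod.snd_add, Prod.smul_fst, Prod.smul_snd, inner_add_left,
    inner_add_right, inner_smul_left, inner_smul_right, Complex.conj_I, Complex.add_re,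
    Complex.add_im, Complex.mul_re, Complex.mul_im, Complex.neg_re, Complex.neg_im, Complex.I_re, Complex.I_im,
    hA p hp, hA q hq] at hsum hsumI
  rw [← inner_conj_symm p.2 q.1, Complex.ext_iff, Complex.conj_re, Complex.conj_im]
  constructor <;> linarith

theorem krein_le_adjointRel (hA : ∀ p ∈ A, (⟪p.1, p.2⟫_ℂ).im = 0) :
    krein A ≤ adjointRel (krein A) := by
  rintro _ ⟨p, hp, rfl⟩ _ ⟨q, hq, rfl⟩
  show ⟪p.1 - p.2, q.1 + q.2⟫_ℂ = ⟪p.1 + p.2, q.1 - q.2⟫_ℂ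
  simp only [inner_add_left, inner_add_right, inner_sub_left, inner_sub_right]
  linear_combination 2 * inner_fst_snd_eq_of_im_inner_eq_zero hA hp hq

theorem norm_snd_le_norm_fst_of_mem_krein (hA : ∀ p ∈ A, 0 ≤ (⟪p.1, p.2⟫_ℂ).re)
    {q : H × H} (hq : q ∈ krein A) : ‖q.2‖ ≤ ‖q.1‖ := by
  obtain ⟨p, hp, rfl⟩ := hq
  exact norm_sub_le_norm_add_of_re_inner_nonneg (𝕜 := ℂ) (hA p hp)

def normRatios (T : Submodule ℂ (H × H)) : Set ℝ :=
  {r : ℝ | ∃ p ∈ T, p ≠ 0 ∧ r = ‖p.2‖ / ‖p.1‖}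

theorem sSup_normRatios_eq_one {T : Submodule ℂ (H × H)} (hT : ∀ q ∈ T, ‖q.2‖ ≤ ‖q.1‖)
    (h : ∀ w < 1, ∃ r ∈ normRatios T, w < r) : sSup (normRatios T) = 1 := by
  have hne : (normRatios T).Nonempty :=
    let ⟨r, hr, _⟩ := h 0 one_pos
    ⟨r, hr⟩
  refine csSup_eq_of_forall_le_of_forall_lt_exists_gt hne ?_ h
  rintro _ ⟨q, hq, -, rfl⟩
  exact div_le_one_of_le₀ (hT q hq) (norm_nonneg _)

theorem one_mem_normRatios_krein {f : H} (hf : f ≠ 0) (hfA : (f, 0) ∈ A) :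
    1 ∈ normRatios (krein A) :=
  ⟨kreinMap (f, 0), Submodule.mem_map_of_mem hfA, by simp [kreinMap, hf],
    by simp [kreinMap, hf]⟩

theorem exists_mem_normRatios_krein_gt (hA : ∀ p ∈ A, 0 ≤ (⟪p.1, p.2⟫_ℂ).re)
    (hunb : ¬ ∃ C > (0 : ℝ), ∀ p ∈ A, ‖p.2‖ ≤ C * ‖p.1‖) {w : ℝ} (hw : w < 1) :
    ∃ r ∈ normRatios (krein A), w < r := by
  have hε : 0 < 1 - w := sub_pos.2 hw
  simp only [not_exists, not_and, not_forall, not_le] at hunb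
  obtain ⟨p, hp, hC⟩ := hunb (2 / (1 - w)) (div_pos two_pos hε)
  obtain ⟨f, g⟩ := p
  have hcon : ‖f - g‖ ≤ ‖f + g‖ := norm_snd_le_norm_fst_of_mem_krein hA ⟨_, hp, rfl⟩
  have hdiff : ‖f + g‖ - ‖f - g‖ ≤ 2 * ‖f‖ := by
    have := norm_sub_norm_le (f + g) (g - f)
    rwa [norm_sub_rev, show f + g - (g - f) = (2 : ℝ) • f by module, norm_smul,
      Real.norm_two] at this
  have hg : ‖g‖ ≤ ‖f + g‖ := by
    have := norm_sub_le (f + g) (f - g)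
    rw [show f + g - (f - g) = (2 : ℝ) • g by module, norm_smul, Real.norm_two] at this
    linarith
  have hpos : 0 < ‖f + g‖ := by
    have := mul_nonneg (div_pos two_pos hε).le (norm_nonneg f)
    linarith
  refine ⟨‖f - g‖ / ‖f + g‖, ⟨(f + g, f - g), ⟨_, hp, rfl⟩, ?_, rfl⟩, ?_⟩
  · exact fun h0 => (norm_pos_iff.1 hpos) (congrArg Prod.fst h0)
  · rw [lt_div_iff₀ hpos]
    rw [div_mul_eq_mul_div, div_lt_iff₀ hε] at hC
    nlinarith [mul_le_mul_of_nonneg_right hg hε.le]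

end KreinTransform

/-- If a positive relation `A` is unbounded or has nontrivial kernel, then `K(A)` is a
symmetric contraction with norm one. -/
theorem krein_norm_one (A : Submodule ℂ (H × H))
    (hpos : ∀ p ∈ A, ((inner ℂ p.1 p.2 : ℂ)).im = 0 ∧ 0 ≤ ((inner ℂ p.1 p.2 : ℂ)).re)
    (h : (¬ ∃ C > (0 : ℝ), ∀ p ∈ A, ‖p.2‖ ≤ C * ‖p.1‖) ∨
      ∃ f : H, f ≠ 0 ∧ ((f, (0 : H)) : H × H) ∈ A) :
    krein A ≤ adjointRel (krein A) ∧ (∀ q ∈ krein A, ‖q.2‖ ≤ ‖q.1‖) ∧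
      sSup {r : ℝ | ∃ p ∈ krein A, p ≠ 0 ∧ r = ‖p.2‖ / ‖p.1‖} = 1 := by
  have hreal : ∀ p ∈ A, (⟪p.1, p.2⟫_ℂ).im = 0 := fun p hp => (hpos p hp).1
  have hacc : ∀ p ∈ A, 0 ≤ (⟪p.1, p.2⟫_ℂ).re := fun p hp => (hpos p hp).2
  have hcon : ∀ q ∈ krein A, ‖q.2‖ ≤ ‖q.1‖ := fun q => norm_snd_le_norm_fst_of_mem_krein hacc
  refine ⟨krein_le_adjointRel hreal, hcon, sSup_normRatios_eq_one hcon fun w hw => ?_⟩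
  rcases h with hunb | ⟨f, hf, hfA⟩
  · exact exists_mem_normRatios_krein_gt hacc hunb hw
  · exact ⟨1, one_mem_normRatios_krein hf hfA, hw⟩
end

section
/- For a linear relation A, the following are equivalent: (i) A is quasi-null, i.e., ⟨f,g⟩ = 0 for all (f,g) ∈ A; (ii) both A and −A are contained in A*; (iii) dom A is orthogonal to ran A. -/
open scoped InnerProductSpace

variable {H : Type*} [NormedAddCommGroup H] [InnerProductSpace ℂ H]

/-- Complex polarization: testing `x + y` and `x + I • y` recovers `B x y` from the diagonal. -/
theorem LinearMap.sesq_eq_zero_of_apply_self_eq_zero {M : Type*} [AddCommGroup M] [Module ℂ M]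
    (B : M →ₗ⋆[ℂ] M →ₗ[ℂ] ℂ) (hB : ∀ x, B x x = 0) (x y : M) : B x y = 0 := by
  have hadd := hB (x + y)
  have hIadd := hB (x + Complex.I • y)
  simp only [map_add, map_smul, LinearMap.add_apply, LinearMap.smul_apply,
    map_smulₛₗ, Complex.conj_I, smul_eq_mul, hB, mul_zero, add_zero, zero_add] at hadd hIadd
  linear_combination (hadd - Complex.I * hIadd) / 2
    + (B x y - B y x) / 2 * Complex.I_mul_I

noncomputable def domRanForm (T : Submodule ℂ (H × H)) : T →ₗ⋆[ℂ] T →ₗ[ℂ] ℂ :=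
  ((innerₛₗ ℂ).comp (LinearMap.fst ℂ H H ∘ₗ T.subtype)).compl₂ (LinearMap.snd ℂ H H ∘ₗ T.subtype)

theorem domRanForm_apply (T : Submodule ℂ (H × H)) (p q : T) :
    domRanForm T p q = ⟪(p : H × H).1, (q : H × H).2⟫_ℂ :=
  rfl

theorem inner_fst_snd_eq_zero_of_forall_mem {T : Submodule ℂ (H × H)}
    (hT : ∀ p ∈ T, ⟪p.1, p.2⟫_ℂ = 0) {p q : H × H} (hp : p ∈ T) (hq : q ∈ T) :
    ⟪p.1, q.2⟫_ℂ = 0 :=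
  (domRanForm T).sesq_eq_zero_of_apply_self_eq_zero
    (fun r => (domRanForm_apply T r r).trans (hT r r.2)) ⟨p, hp⟩ ⟨q, hq⟩

/-- `T ⊆ S*` and `-T ⊆ S*` say that `⟪k, f⟫ = ⟪h, g⟫` and `-⟪k, f⟫ = ⟪h, g⟫`; together,
both sides vanish. -/
theorem le_adjointRel_and_map_negMap_le_iff (T S : Submodule ℂ (H × H)) :
    T ≤ adjointRel S ∧ T.map negMap ≤ adjointRel S ↔
      ∀ p ∈ T, ∀ q ∈ S, ⟪p.2, q.1⟫_ℂ = 0 ∧ ⟪p.1, q.2⟫_ℂ = 0 := by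
  constructor
  · rintro ⟨hT, hnegT⟩ p hp q hq
    have hsame : ⟪p.2, q.1⟫_ℂ = ⟪p.1, q.2⟫_ℂ := hT hp q hq
    have hneg : ⟪-p.2, q.1⟫_ℂ = ⟪p.1, q.2⟫_ℂ := hnegT ⟨p, hp, rfl⟩ q hq
    rw [inner_neg_left] at hneg
    exact ⟨by linear_combination (hsame - hneg) / 2, by linear_combination -(hsame + hneg) / 2⟩
  · intro h
    refine ⟨fun p hp q hq => ?_, ?_⟩
    · rw [(h p hp q hq).1, (h p hp q hq).2]
    · rintro _ ⟨p, hp, rfl⟩ q hq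
      change ⟪-p.2, q.1⟫_ℂ = ⟪p.1, q.2⟫_ℂ
      rw [inner_neg_left, (h p hp q hq).1, (h p hp q hq).2, neg_zero]

/-- Characterizations of quasi-null relations: `A` quasi-null iff `A, −A ⊆ A*` iff
`dom A ⊥ ran A`. -/
theorem quasiNull_equivalences (A : Submodule ℂ (H × H)) :
    ((∀ p ∈ A, (inner ℂ p.1 p.2 : ℂ) = 0) ↔
        (A ≤ adjointRel A ∧ A.map negMap ≤ adjointRel A)) ∧
    ((∀ p ∈ A, (inner ℂ p.1 p.2 : ℂ) = 0) ↔
        ∀ p ∈ A, ∀ q ∈ A, (inner ℂ p.1 q.2 : ℂ) = 0) := by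
  have hdomRan : (∀ p ∈ A, ⟪p.1, p.2⟫_ℂ = 0) ↔ ∀ p ∈ A, ∀ q ∈ A, ⟪p.1, q.2⟫_ℂ = 0 :=
    ⟨fun h _ hp _ hq => inner_fst_snd_eq_zero_of_forall_mem h hp hq,
      fun h p hp => h p hp p hp⟩
  refine ⟨?_, hdomRan⟩
  rw [le_adjointRel_and_map_negMap_le_iff, hdomRan]
  refine ⟨fun h p hp q hq => ⟨?_, h p hp q hq⟩, fun h p hp q hq => (h p hp q hq).2⟩
  rw [← inner_conj_symm, h q hq p hp, map_zero]
end

section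
/- A linear relation A is lower semi-bounded with bound m (i.e., ⟨f,g⟩ ≥ m‖f‖² for all (f,g) ∈ A and A symmetric) if and only if A is symmetric and for every real α < m and every (h,k) ∈ (A − αI)^{-1}, one has ‖k‖ ≤ (m − α)^{-1}‖h‖. -/
/-!
Since `⟨f, g - α f⟩ = ⟨f, g⟩ - α ‖f‖²`, the bound `m ‖f‖² ≤ Re ⟨f, g⟩` gives
`(m - α) ‖f‖² ≤ Re ⟨f, g - α f⟩ ≤ ‖f‖ ‖g - α f‖` by Cauchy–Schwarz. Conversely, squaring
`(m - α) ‖f‖ ≤ ‖g - α f‖` and expanding gives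
`2 α (Re ⟨f, g⟩ - m ‖f‖²) ≤ ‖g‖² - m² ‖f‖²` for every `α < m`, and letting `α → -∞` forces
`Re ⟨f, g⟩ - m ‖f‖² ≥ 0`.
-/

open scoped InnerProductSpace

variable {H : Type*} [NormedAddCommGroup H] [InnerProductSpace ℂ H]

theorem nonneg_of_forall_lt_mul_le {m c C : ℝ} (h : ∀ α < m, α * c ≤ C) : 0 ≤ c := by
  by_contra! hc
  -- `α := min (m - 1) (C / c - 1)` makes `α * c ≥ C - c > C`.
  have hα := h (min (m - 1) (C / c - 1)) (by linarith [min_le_left (m - 1) (C / c - 1)])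
  nlinarith [min_le_right (m - 1) (C / c - 1), div_mul_cancel₀ C hc.ne]

section InnerProduct

variable {𝕜 E : Type*} [RCLike 𝕜] [NormedAddCommGroup E] [InnerProductSpace 𝕜 E]

open RCLike

theorem re_inner_sub_ofReal_smul (f g : E) (α : ℝ) :
    re ⟪f, g - (α : 𝕜) • f⟫_𝕜 = re ⟪f, g⟫_𝕜 - α * ‖f‖ ^ 2 := by
  rw [inner_sub_right, inner_smul_right, inner_self_eq_norm_sq_to_K, map_sub,
    ← ofReal_pow, ← ofReal_mul, ofReal_re]

theorem norm_sub_ofReal_smul_sq (f g : E) (α : ℝ) :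
    ‖g - (α : 𝕜) • f‖ ^ 2 = ‖g‖ ^ 2 - 2 * α * re ⟪f, g⟫_𝕜 + α ^ 2 * ‖f‖ ^ 2 := by
  rw [@norm_sub_sq 𝕜, inner_smul_right, ← inner_conj_symm, re_ofReal_mul, conj_re, norm_smul,
    norm_ofReal, mul_pow, sq_abs]
  ring

theorem sub_mul_norm_le_norm_sub_ofReal_smul {f g : E} {m α : ℝ}
    (hbound : m * ‖f‖ ^ 2 ≤ re ⟪f, g⟫_𝕜) :
    (m - α) * ‖f‖ ≤ ‖g - (α : 𝕜) • f‖ := by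
  have key : ‖f‖ * ((m - α) * ‖f‖) ≤ ‖f‖ * ‖g - (α : 𝕜) • f‖ :=
    calc ‖f‖ * ((m - α) * ‖f‖) = re ⟪f, g⟫_𝕜 - α * ‖f‖ ^ 2 - (re ⟪f, g⟫_𝕜 - m * ‖f‖ ^ 2) := by
          ring
      _ ≤ re ⟪f, g - (α : 𝕜) • f⟫_𝕜 := by rw [re_inner_sub_ofReal_smul]; linarith
      _ ≤ ‖f‖ * ‖g - (α : 𝕜) • f‖ := re_inner_le_norm f _
  rcases (norm_nonneg f).eq_or_lt with hf | hf
  · rw [← hf, mul_zero]; positivity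
  · exact le_of_mul_le_mul_left key hf

theorem mul_norm_sq_le_re_inner_iff (f g : E) (m : ℝ) :
    m * ‖f‖ ^ 2 ≤ re ⟪f, g⟫_𝕜 ↔ ∀ α < m, (m - α) * ‖f‖ ≤ ‖g - (α : 𝕜) • f‖ := by
  refine ⟨fun h α _ ↦ sub_mul_norm_le_norm_sub_ofReal_smul h, fun h ↦ ?_⟩
  have hlin : ∀ α < m, α * (2 * (re ⟪f, g⟫_𝕜 - m * ‖f‖ ^ 2)) ≤ ‖g‖ ^ 2 - m ^ 2 * ‖f‖ ^ 2 := by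
    intro α hα
    have hsq := pow_le_pow_left₀ (by nlinarith [norm_nonneg f]) (h α hα) 2
    rw [norm_sub_ofReal_smul_sq] at hsq
    nlinarith
  linarith [nonneg_of_forall_lt_mul_le hlin]

end InnerProduct

/-- A relation is lower semi-bounded with bound `m` iff it is symmetric and
`‖(A − αI)⁻¹‖ ≤ (m − α)⁻¹` for every real `α < m`. -/
theorem lowerSemibounded_iff (A : Submodule ℂ (H × H)) (m : ℝ) :
    ((∀ p ∈ A, ((inner ℂ p.1 p.2 : ℂ)).im = 0) ∧
        ∀ p ∈ A, m * ‖p.1‖ ^ 2 ≤ ((inner ℂ p.1 p.2 : ℂ)).re) ↔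
      ((∀ p ∈ A, ((inner ℂ p.1 p.2 : ℂ)).im = 0) ∧
        ∀ α : ℝ, α < m → ∀ p ∈ A, ‖p.1‖ ≤ (m - α)⁻¹ * ‖p.2 - (α : ℂ) • p.1‖) := by
  refine and_congr_right fun _ ↦ ?_
  have hiff (p : H × H) := mul_norm_sq_le_re_inner_iff (𝕜 := ℂ) p.1 p.2 m
  simp only [RCLike.re_to_complex] at hiff
  constructor
  · intro h α hα p hp
    rw [le_inv_mul_iff₀ (sub_pos.2 hα)]
    exact (hiff p).1 (h p hp) α hα
  · intro h p hp
    refine (hiff p).2 fun α hα ↦ ?_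
    rw [← le_inv_mul_iff₀ (sub_pos.2 hα)]
    exact h α hα p hp
end

section
/- Let A be a closed quasi-null relation, S a closed positive extension of A with orthogonal decomposition S = A ⊕ L, L ⊆ A*. Then for every (f,g) ∈ A and (h,k) ∈ L, one has ⟨f,k⟩ = 0 and ⟨g,h⟩ = 0. -/
open scoped InnerProductSpace

variable {H : Type*} [NormedAddCommGroup H] [InnerProductSpace ℂ H]

/-! On a positive symmetric relation `S` the form `[p, q] = ⟨p.1, q.2⟩` is a positive
semidefinite Hermitian form, Hermitian because `S ⊆ S*`. Elements of a quasi-null `A ⊆ S` are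
isotropic for it, so by Cauchy–Schwarz they are `[·,·]`-orthogonal to all of `S`, which gives
`⟨f, k⟩ = 0`; symmetry of `S` turns this into `⟨g, h⟩ = 0`. -/

theorem PreInnerProductSpace.Core.inner_eq_zero_of_inner_self_eq_zero {𝕜 F : Type*} [RCLike 𝕜]
    [AddCommGroup F] [Module 𝕜 F] [c : PreInnerProductSpace.Core 𝕜 F] {x : F}
    (hx : c.inner x x = 0) (y : F) : c.inner x y = 0 := by
  let _ := InnerProductSpace.Core.toPreInner' (𝕜 := 𝕜) (F := F)
  have hCS := InnerProductSpace.Core.inner_mul_inner_self_le (𝕜 := 𝕜) x y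
  rw [InnerProductSpace.Core.norm_inner_symm y x] at hCS
  have hsq : ‖inner 𝕜 x y‖ * ‖inner 𝕜 x y‖ ≤ 0 := by
    simpa [show inner 𝕜 x x = 0 from hx] using hCS
  exact norm_eq_zero.mp (mul_self_eq_zero.mp (le_antisymm hsq (mul_self_nonneg _)))

noncomputable abbrev semiInnerCoreOfPositive (S : Submodule ℂ (H × H)) (hSsym : S ≤ adjointRel S)
    (hSpos : ∀ p ∈ S, 0 ≤ (inner ℂ p.1 p.2 : ℂ).re) : PreInnerProductSpace.Core ℂ S where
  inner p q := inner ℂ p.1.1 q.1.2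
  conj_inner_symm p q := by
    simp only [inner_conj_symm]
    exact hSsym p.2 q q.2
  re_inner_nonneg p := hSpos p p.2
  add_left p q r := inner_add_left _ _ _
  smul_left p q c := inner_smul_left _ _ _

theorem quasiNull_extension_orthogonality_general (A S : Submodule ℂ (H × H))
    (hAqn : ∀ p ∈ A, (inner ℂ p.1 p.2 : ℂ) = 0)
    (hAS : A ≤ S) (hSsym : S ≤ adjointRel S)
    (hSpos : ∀ p ∈ S, ((inner ℂ p.1 p.2 : ℂ)).im = 0 ∧ 0 ≤ ((inner ℂ p.1 p.2 : ℂ)).re) :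
    ∀ p ∈ A, ∀ q ∈ S ⊓ orthRel A,
      (inner ℂ p.1 q.2 : ℂ) = 0 ∧ (inner ℂ p.2 q.1 : ℂ) = 0 := by
  intro p hp q hq
  have hpq : (inner ℂ p.1 q.2 : ℂ) = 0 :=
    PreInnerProductSpace.Core.inner_eq_zero_of_inner_self_eq_zero
      (c := semiInnerCoreOfPositive S hSsym fun p hp => (hSpos p hp).2)
      (x := (⟨p, hAS hp⟩ : S)) (hAqn p hp) ⟨q, hq.1⟩
  exact ⟨hpq, (hSsym (hAS hp) q hq.1).trans hpq⟩

/-- For a closed positive symmetric extension `S = A ⊕ L` of a closed quasi-null relation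
`A`, one has `⟨f,k⟩ = 0` and `⟨g,h⟩ = 0` for all `(f,g) ∈ A`, `(h,k) ∈ L = S ⊖ A`. -/
theorem quasiNull_extension_orthogonality (A S : Submodule ℂ (H × H))
    (hAc : IsClosed (A : Set (H × H))) (hSc : IsClosed (S : Set (H × H)))
    (hAqn : ∀ p ∈ A, (inner ℂ p.1 p.2 : ℂ) = 0)
    (hAS : A ≤ S) (hSsym : S ≤ adjointRel S)
    (hSpos : ∀ p ∈ S, ((inner ℂ p.1 p.2 : ℂ)).im = 0 ∧ 0 ≤ ((inner ℂ p.1 p.2 : ℂ)).re) :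
    ∀ p ∈ A, ∀ q ∈ S ⊓ orthRel A,
      (inner ℂ p.1 q.2 : ℂ) = 0 ∧ (inner ℂ p.2 q.1 : ℂ) = 0 :=
  quasiNull_extension_orthogonality_general A S hAqn hAS hSsym hSpos
end

section
/- Let S be a closed positive extension of a closed positive linear relation A. Then A is quasi-null if and only if −S ⊆ A*. -/
open scoped InnerProductSpace

variable {H : Type*} [NormedAddCommGroup H] [InnerProductSpace ℂ H]

/-!
On a symmetric positive relation `S` the form `[p, q] = ⟪p.1, q.2⟫` is Hermitian and positive
semidefinite, so by Cauchy–Schwarz every `q ∈ S` with `[q, q] = 0` satisfies `[p, q] = 0` for all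
`p ∈ S`. Since `S` is symmetric, `(p.1, -p.2) ∈ A*` amounts to `[p, q] = -[p, q]` for all
`q ∈ A`; hence `−S ⊆ A*` says exactly that `[S, A] = 0`, which holds iff `[q, q] = 0` on `A`.
-/

theorem inner_fst_snd_eq_zero_of_inner_self_eq_zero {S : Submodule ℂ (H × H)}
    (hSsym : S ≤ adjointRel S) (hSpos : ∀ p ∈ S, 0 ≤ (inner ℂ p.1 p.2 : ℂ).re)
    {p q : H × H} (hp : p ∈ S) (hq : q ∈ S) (hq0 : (inner ℂ q.1 q.2 : ℂ) = 0) :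
    (inner ℂ p.1 q.2 : ℂ) = 0 := by
  let form : PreInnerProductSpace.Core ℂ S :=
    { inner := fun p q => inner ℂ (p : H × H).1 (q : H × H).2
      conj_inner_symm := fun p q => by
        rw [inner_conj_symm]
        exact hSsym p.2 q q.2
      re_inner_nonneg := fun p => hSpos p p.2
      add_left := fun _ _ _ => inner_add_left _ _ _
      smul_left := fun _ _ _ => inner_smul_left _ _ _ }
  have hcs := InnerProductSpace.Core.inner_mul_inner_self_le (c := form) ⟨p, hp⟩ ⟨q, hq⟩
  change ‖(inner ℂ p.1 q.2 : ℂ)‖ * ‖(inner ℂ q.1 p.2 : ℂ)‖ ≤ _ * (inner ℂ q.1 q.2 : ℂ).re at hcs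
  have hswap : ‖(inner ℂ q.1 p.2 : ℂ)‖ = ‖(inner ℂ p.1 q.2 : ℂ)‖ := by
    rw [norm_inner_symm, hSsym hp q hq]
  rw [hswap, hq0, Complex.zero_re, mul_zero] at hcs
  exact norm_eq_zero.mp (mul_self_eq_zero.mp (le_antisymm hcs (mul_self_nonneg _)))

theorem map_negMap_le_adjointRel_iff {A S : Submodule ℂ (H × H)} (hAS : A ≤ S)
    (hSsym : S ≤ adjointRel S) :
    S.map negMap ≤ adjointRel A ↔ ∀ p ∈ S, ∀ q ∈ A, (inner ℂ p.1 q.2 : ℂ) = 0 := by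
  rw [Submodule.map_le_iff_le_comap]
  change (∀ p ∈ S, ∀ q ∈ A, (inner ℂ (-p.2) q.1 : ℂ) = inner ℂ p.1 q.2) ↔ _
  refine forall₂_congr fun p hp => forall₂_congr fun q hq => ?_
  rw [inner_neg_left, hSsym hp q (hAS hq), neg_eq_self]

theorem quasiNull_iff_neg_ext_in_adjoint_general (A S : Submodule ℂ (H × H))
    (hAS : A ≤ S) (hSsym : S ≤ adjointRel S)
    (hSpos : ∀ p ∈ S, ((inner ℂ p.1 p.2 : ℂ)).im = 0 ∧ 0 ≤ ((inner ℂ p.1 p.2 : ℂ)).re) :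
    (∀ p ∈ A, (inner ℂ p.1 p.2 : ℂ) = 0) ↔ S.map negMap ≤ adjointRel A := by
  rw [map_negMap_le_adjointRel_iff hAS hSsym]
  refine ⟨fun hA p hp q hq => ?_, fun h q hq => h q (hAS hq) q hq⟩
  exact inner_fst_snd_eq_zero_of_inner_self_eq_zero hSsym (fun p hp => (hSpos p hp).2) hp
    (hAS hq) (hA q hq)

/-- For a closed positive extension `S` of a closed positive relation `A`:
`A` is quasi-null iff `−S ⊆ A*`. -/
theorem quasiNull_iff_neg_ext_in_adjoint (A S : Submodule ℂ (H × H))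
    (hAc : IsClosed (A : Set (H × H))) (hSc : IsClosed (S : Set (H × H)))
    (hApos : ∀ p ∈ A, ((inner ℂ p.1 p.2 : ℂ)).im = 0 ∧ 0 ≤ ((inner ℂ p.1 p.2 : ℂ)).re)
    (hAS : A ≤ S) (hSsym : S ≤ adjointRel S)
    (hSpos : ∀ p ∈ S, ((inner ℂ p.1 p.2 : ℂ)).im = 0 ∧ 0 ≤ ((inner ℂ p.1 p.2 : ℂ)).re) :
    (∀ p ∈ A, (inner ℂ p.1 p.2 : ℂ) = 0) ↔ S.map negMap ≤ adjointRel A :=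
  quasiNull_iff_neg_ext_in_adjoint_general A S hAS hSsym hSpos
end

section
/- Let V = {δ_j : j ∈ ℕ₀} be an orthonormal basis of ℓ²(V), w = Σ_{j≥1} w_j δ_j ∈ ℓ² with all w_j real and nonzero, and let A = {(f, ⟨w,f⟩δ₀) : f ⊥ δ₀} be the adjacency relation of the infinite weighted star graph. Then the adjoint of A is A* = {(h, ⟨δ₀,h⟩w) : h ∈ ℓ²} ⊕ span{(0, δ₀)}, and for every nonzero ζ ∈ ℂ the deficiency space N_ζ(A*) = {(u, ζu) ∈ A*} equals span{(δ₀ + w/ζ, ζδ₀ + w)}; in particular dim N_ζ(A*) = 1. -/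
open scoped InnerProductSpace

variable {H : Type*} [NormedAddCommGroup H] [InnerProductSpace ℂ H]

/-- `ℓ²(ℕ₀)`, the Hilbert space of square-summable complex sequences. -/
noncomputable abbrev ellTwo := lp (fun _ : ℕ => ℂ) 2

/-- The canonical orthonormal basis vectors `δ_j` of `ℓ²`. -/
noncomputable def δ (j : ℕ) : ellTwo := lp.single 2 j 1

/-- The adjacency relation `A = {(f, ⟨w,f⟩δ₀) : f ⊥ δ₀}` of the infinite directed and
weighted star graph with weights `w`. -/
noncomputable def starRel (w : ellTwo) : Submodule ℂ (ellTwo × ellTwo) where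
  carrier := {p | (inner ℂ (δ 0) p.1 : ℂ) = 0 ∧ p.2 = (inner ℂ w p.1 : ℂ) • δ 0}
  add_mem' := by
    rintro a b ⟨ha1, ha2⟩ ⟨hb1, hb2⟩
    refine ⟨?_, ?_⟩
    · simp only [Prod.fst_add, inner_add_right, ha1, hb1, add_zero]
    · simp only [Prod.snd_add, Prod.fst_add, inner_add_right, ha2, hb2, add_smul]
  zero_mem' := by simp
  smul_mem' := by
    rintro c p ⟨h1, h2⟩
    refine ⟨?_, ?_⟩
    · simp only [Prod.smul_fst, inner_smul_right, h1, mul_zero]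
    · simp only [Prod.smul_snd, Prod.smul_fst, inner_smul_right, h2, smul_smul]

/-! The relation `A` only tests against vectors `f ⊥ δ₀`, so the condition `(h, k) ∈ A*` only
constrains `k - ⟨δ₀, h⟩ w` to be orthogonal to `δ₀ᗮ`, i.e. to lie on the line `ℂ δ₀`; this
gives `A*`. On the eigenvalue condition `k = ζ h`, pairing with `δ₀` (which is orthogonal
to `w`) fixes the free coefficient as `ζ ⟨δ₀, h⟩`, so `h` is a multiple of `δ₀ + w/ζ`. -/


lemma mem_span_singleton_of_forall_inner_eq_zero {e k : H}
    (h : ∀ f : H, ⟪e, f⟫_ℂ = 0 → ⟪k, f⟫_ℂ = 0) : k ∈ ℂ ∙ e := by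
  rw [← Submodule.orthogonal_orthogonal (ℂ ∙ e), Submodule.mem_orthogonal']
  exact fun f hf => h f (Submodule.mem_orthogonal_singleton_iff_inner_right.1 hf)

lemma mem_adjointRel_iff_of_mem_iff {T : Submodule ℂ (H × H)} {e w : H}
    (hT : ∀ q : H × H, q ∈ T ↔ ⟪e, q.1⟫_ℂ = 0 ∧ q.2 = ⟪w, q.1⟫_ℂ • e) (p : H × H) :
    p ∈ adjointRel T ↔ ∃ c : ℂ, p.2 = ⟪e, p.1⟫_ℂ • w + c • e := by
  constructor
  · intro hp
    have hperp : ∀ f : H, ⟪e, f⟫_ℂ = 0 → ⟪p.2 - ⟪e, p.1⟫_ℂ • w, f⟫_ℂ = 0 := by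
      intro f hf
      have hpf := hp (f, ⟪w, f⟫_ℂ • e) ((hT _).2 ⟨hf, rfl⟩)
      simp only [inner_smul_right] at hpf
      rw [inner_sub_left, inner_smul_left, hpf, inner_conj_symm]
      ring
    obtain ⟨c, hc⟩ :=
      Submodule.mem_span_singleton.1 (mem_span_singleton_of_forall_inner_eq_zero hperp)
    exact ⟨c, by rw [hc]; abel⟩
  · rintro ⟨c, hc⟩ q hq
    obtain ⟨hq1, hq2⟩ := (hT q).1 hq
    rw [hc, hq2, inner_add_left, inner_smul_left, inner_smul_left, inner_smul_right, hq1,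
      mul_zero, add_zero, inner_conj_symm]
    ring

section Eigenspace

variable {S : Submodule ℂ (H × H)} {e w : H} {ζ : ℂ}

lemma inf_graph_smul_id_eq_span (hS : ∀ p : H × H, p ∈ S ↔ ∃ c : ℂ, p.2 = ⟪e, p.1⟫_ℂ • w + c • e)
    (he : ⟪e, e⟫_ℂ = 1) (hew : ⟪e, w⟫_ℂ = 0) (hζ : ζ ≠ 0) :
    S ⊓ LinearMap.graph (ζ • LinearMap.id) = ℂ ∙ (e + ζ⁻¹ • w, ζ • e + w) := by
  have hv : (ζ • e + w : H) = ζ • (e + ζ⁻¹ • w) := by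
    rw [smul_add, smul_smul, mul_inv_cancel₀ hζ, one_smul]
  apply le_antisymm
  · rintro ⟨f, g⟩ ⟨hpS, hpG⟩
    obtain ⟨c, hc⟩ := (hS _).1 hpS
    replace hpG : g = ζ • f := (LinearMap.mem_graph_iff _ _).1 hpG
    set a := ⟪e, f⟫_ℂ
    have hc' : c = ζ * a := by
      have := congrArg (⟪e, ·⟫_ℂ) (hpG.symm.trans hc)
      simpa only [inner_smul_right, inner_add_right, he, hew, mul_zero, mul_one, zero_add]
        using this.symm
    have hf : f = a • (e + ζ⁻¹ • w) := by
      apply smul_right_injective H hζ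
      calc ζ • f = a • w + (ζ * a) • e := by rw [← hpG, ← hc', ← hc]
        _ = ζ • a • (e + ζ⁻¹ • w) := by match_scalars <;> field_simp
    refine Submodule.mem_span_singleton.2 ⟨a, Prod.ext hf.symm ?_⟩
    simp only [Prod.smul_snd, hpG, hf, hv, smul_comm a ζ]
  · rw [Submodule.span_singleton_le_iff_mem]
    refine ⟨(hS _).2 ⟨ζ, ?_⟩, ?_⟩
    · simp only [inner_add_right, inner_smul_right, he, hew, mul_zero, add_zero, one_smul]
      abel
    · exact (LinearMap.mem_graph_iff _ _).2 hv

lemma finrank_inf_graph_smul_id_eq_one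
    (hS : ∀ p : H × H, p ∈ S ↔ ∃ c : ℂ, p.2 = ⟪e, p.1⟫_ℂ • w + c • e)
    (he : ⟪e, e⟫_ℂ = 1) (hew : ⟪e, w⟫_ℂ = 0) (hζ : ζ ≠ 0) :
    Module.finrank ℂ ↥(S ⊓ LinearMap.graph (ζ • LinearMap.id)) = 1 := by
  rw [inf_graph_smul_id_eq_span hS he hew hζ]
  refine finrank_span_singleton fun hv => ?_
  have h1 := congrArg (⟪e, ·.1⟫_ℂ) hv
  simp only [inner_add_right, inner_smul_right, he, hew, mul_zero, add_zero, Prod.fst_zero,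
    inner_zero_right] at h1
  exact one_ne_zero h1

end Eigenspace

lemma inner_δ_zero (f : ellTwo) : ⟪δ 0, f⟫_ℂ = (f : ∀ _ : ℕ, ℂ) 0 := by
  simp [δ, lp.inner_single_left, RCLike.inner_apply]

lemma inner_δ_zero_self : ⟪δ 0, δ 0⟫_ℂ = 1 := by
  simp [δ]

theorem starRel_adjoint_and_deficiency_general (w : ellTwo)
    (hw0 : (w : ∀ _ : ℕ, ℂ) 0 = 0) :
    (∀ p : ellTwo × ellTwo, p ∈ adjointRel (starRel w) ↔
        ∃ c : ℂ, p.2 = (inner ℂ (δ 0) p.1 : ℂ) • w + c • δ 0) ∧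
    ∀ ζ : ℂ, ζ ≠ 0 →
      adjointRel (starRel w) ⊓ LinearMap.graph (ζ • (LinearMap.id : ellTwo →ₗ[ℂ] ellTwo)) =
          Submodule.span ℂ {((δ 0 + ζ⁻¹ • w, ζ • δ 0 + w) : ellTwo × ellTwo)} ∧
        Module.finrank ℂ
          ↥(adjointRel (starRel w) ⊓
            LinearMap.graph (ζ • (LinearMap.id : ellTwo →ₗ[ℂ] ellTwo))) = 1 := by
  have hadj := mem_adjointRel_iff_of_mem_iff (T := starRel w) (fun _ => Iff.rfl)
  have hew : ⟪δ 0, w⟫_ℂ = 0 := by rw [inner_δ_zero, hw0]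
  exact ⟨hadj, fun ζ hζ => ⟨inf_graph_smul_id_eq_span hadj inner_δ_zero_self hew hζ,
    finrank_inf_graph_smul_id_eq_one hadj inner_δ_zero_self hew hζ⟩⟩

/-- Adjoint and deficiency spaces of the adjacency relation of the infinite weighted
star graph: `A* = {(h, ⟨δ₀,h⟩w)} ⊕ span{(0,δ₀)}`, and for each `ζ ≠ 0`,
`N_ζ(A*) = span{(δ₀ + w/ζ, ζδ₀ + w)}` is one-dimensional. -/
theorem starRel_adjoint_and_deficiency (w : ellTwo)
    (hw0 : (w : ∀ _ : ℕ, ℂ) 0 = 0)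
    (hw : ∀ j : ℕ, 1 ≤ j → (w : ∀ _ : ℕ, ℂ) j ≠ 0 ∧ ((w : ∀ _ : ℕ, ℂ) j).im = 0) :
    (∀ p : ellTwo × ellTwo, p ∈ adjointRel (starRel w) ↔
        ∃ c : ℂ, p.2 = (inner ℂ (δ 0) p.1 : ℂ) • w + c • δ 0) ∧
    ∀ ζ : ℂ, ζ ≠ 0 →
      adjointRel (starRel w) ⊓ LinearMap.graph (ζ • (LinearMap.id : ellTwo →ₗ[ℂ] ellTwo)) =
          Submodule.span ℂ {((δ 0 + ζ⁻¹ • w, ζ • δ 0 + w) : ellTwo × ellTwo)} ∧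
        Module.finrank ℂ
          ↥(adjointRel (starRel w) ⊓
            LinearMap.graph (ζ • (LinearMap.id : ellTwo →ₗ[ℂ] ellTwo))) = 1 :=
  starRel_adjoint_and_deficiency_general w hw0
end
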